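/- arXiv:2405.05628 — 2 statements merged into one kernel-verified Lean document; each statement's English description precedes it below -/
import Mathlib

section
/- Let $[m_1,\dots,m_n]$ be a dominant integral weight with $m_1 \ge m_2 \ge \cdots \ge m_n \ge 0$, and let $a_{1,\dots,k}$ denote the leading principal $k\times k$ minor of the matrix of coordinate functions on $GL_n$. Then the function $v_0 = a_1^{m_1-m_2}\, a_{1,2}^{m_2-m_3} \cdots a_{1,\dots,n}^{m_n}$ is a highest weight vector for $\mathfrak{gl}_n$ of weight $[m_1,\dots,m_n]$: it is an eigenvector for each Cartan element $E_{i,i}$ with eigenvalue $m_i$, and it is annihilated by every raising operator $E_{i,j}$ with $i < j$. -/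
open MvPolynomial

theorem Derivation.map_prod' {R A : Type*} [CommRing R] [CommRing A] [Algebra R A]
    (D : Derivation R A A) {ι : Type*} [DecidableEq ι]
    (s : Finset ι) (f : ι → A) :
    D (∏ i ∈ s, f i) = ∑ i ∈ s, (∏ j ∈ s.erase i, f j) * D (f i) := by
  induction s using Finset.induction with
  | empty => simp
  | @insert a s ha ih =>
    rw [Finset.prod_insert ha, D.leibniz, Finset.sum_insert ha, ih,
      Finset.erase_insert ha, smul_eq_mul, smul_eq_mul, Finset.mul_sum, add_comm]
    congr 1
    apply Finset.sum_congr rfl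
    intro i hi
    rw [Finset.erase_insert_of_ne (by rintro rfl; exact ha hi),
      Finset.prod_insert (fun h => ha (Finset.mem_of_mem_erase h))]
    ring

theorem Derivation.map_det {R A : Type*} [CommRing R] [CommRing A] [Algebra R A]
    {k : ℕ} (D : Derivation R A A) (M : Matrix (Fin k) (Fin k) A) :
    D M.det = ∑ c, (M.updateCol c fun r => D (M r c)).det := by
  simp only [Matrix.det_apply]
  rw [map_sum, Finset.sum_comm]
  apply Finset.sum_congr rfl
  intro σ _
  rw [Units.smul_def, map_zsmul, D.map_prod', Finset.smul_sum]
  apply Finset.sum_congr rfl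
  intro c _
  rw [← Finset.mul_prod_erase _ _ (Finset.mem_univ c), Units.smul_def,
    Matrix.updateCol_self]
  congr 1
  rw [mul_comm]
  congr 1
  apply Finset.prod_congr rfl
  intro i hi
  rw [Matrix.updateCol_ne (Finset.ne_of_mem_erase hi)]

theorem Derivation.map_pow_eig {A : Type*} [CommRing A] [Algebra ℂ A]
    (D : Derivation ℂ A A) (a : A) (c : ℂ)
    (h : D a = c • a) (e : ℕ) : D (a ^ e) = ((e : ℂ) * c) • a ^ e := by
  induction e with
  | zero => simp
  | succ e ih =>
    rw [pow_succ, D.leibniz, h, ih, smul_eq_mul, smul_eq_mul, mul_smul_comm,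
      mul_smul_comm, ← pow_succ, ← pow_succ', pow_succ', ← pow_succ']
    rw [← add_smul]
    push_cast
    ring_nf

theorem Derivation.map_prod_eig {A : Type*} [CommRing A] [Algebra ℂ A]
    (D : Derivation ℂ A A) {ι : Type*}
    [DecidableEq ι] (s : Finset ι) (f : ι → A) (c : ι → ℂ)
    (h : ∀ i ∈ s, D (f i) = c i • f i) :
    D (∏ i ∈ s, f i) = (∑ i ∈ s, c i) • ∏ i ∈ s, f i := by
  rw [D.map_prod', Finset.sum_smul]
  apply Finset.sum_congr rfl
  intro i hi
  rw [h i hi, mul_smul_comm, Finset.prod_erase_mul _ _ hi]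

/-- Action of `E_{i,j}` on polynomial functions on `GL_n` (right shifts), acting on the
column indices of the coordinate functions `a_i^j = X (i, j)`. -/
noncomputable def Eact (n : ℕ) (i j : Fin n) :
    Derivation ℂ (MvPolynomial (Fin n × Fin n) ℂ) (MvPolynomial (Fin n × Fin n) ℂ) :=
  MvPolynomial.mkDerivation ℂ fun p => if p.1 = j then X (i, p.2) else 0

/-- The minor `a_{i_1,...,i_k}` (rows `1,...,k`, columns `i_1,...,i_k`). -/
noncomputable def aMinor (n k : ℕ) (hk : k ≤ n) (cols : Fin k → Fin n) :
    MvPolynomial (Fin n × Fin n) ℂ :=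
  (Matrix.of fun r c : Fin k => X (cols c, Fin.castLE hk r)).det

theorem Eact_aMinor (n k : ℕ) (hk : k ≤ n) (i j : Fin n) (hij : i ≤ j) :
    Eact n i j (aMinor n k hk (fun t => Fin.castLE hk t)) =
      (if i = j ∧ (j : ℕ) < k then (1 : ℂ) else 0) •
        aMinor n k hk (fun t => Fin.castLE hk t) := by
  set M : Matrix (Fin k) (Fin k) (MvPolynomial (Fin n × Fin n) ℂ) :=
    Matrix.of fun r c : Fin k => X (Fin.castLE hk c, Fin.castLE hk r) with hM
  have hD : ∀ r c : Fin k, Eact n i j (M r c) =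
      if (Fin.castLE hk c : Fin n) = j then X (i, Fin.castLE hk r) else 0 := by
    intro r c
    simp [hM, Eact, mkDerivation_X]
  have key : Eact n i j (aMinor n k hk (fun t => Fin.castLE hk t)) =
      ∑ c, (M.updateCol c fun r =>
        if (Fin.castLE hk c : Fin n) = j then X (i, Fin.castLE hk r) else 0).det := by
    rw [show aMinor n k hk (fun t => Fin.castLE hk t) = M.det from rfl,
      Derivation.map_det]
    exact Finset.sum_congr rfl fun c _ => by simp_rw [hD]
  by_cases hjk : (j : ℕ) < k
  · set c0 : Fin k := ⟨(j : ℕ), hjk⟩ with hc0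
    have hcast : (Fin.castLE hk c0 : Fin n) = j := by ext; simp [hc0]
    rw [key, Finset.sum_eq_single c0]
    · rw [show (fun r => if (Fin.castLE hk c0 : Fin n) = j
          then X (i, Fin.castLE hk r) else (0 : MvPolynomial (Fin n × Fin n) ℂ)) =
          fun r => X (i, Fin.castLE hk r) from funext fun r => if_pos hcast]
      by_cases hij' : i = j
      · subst hij'
        rw [if_pos ⟨rfl, hjk⟩, one_smul]
        have : (fun r => X (i, Fin.castLE hk r) :
            Fin k → MvPolynomial (Fin n × Fin n) ℂ) = fun r => M r c0 := by
          funext r; rw [hM]; simp [hcast]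
        rw [this, Matrix.updateCol_eq_self]
        rfl
      · have hilt : (i : ℕ) < k := lt_of_le_of_lt (Fin.le_iff_val_le_val.mp hij) hjk
        set ci : Fin k := ⟨(i : ℕ), hilt⟩ with hci
        have hne : ci ≠ c0 := by
          simp only [hci, hc0, Ne, Fin.mk.injEq]
          exact fun h => hij' (Fin.ext h)
        rw [if_neg (by simp [hij', hjk]), zero_smul]
        apply Matrix.det_zero_of_column_eq hne.symm
        intro r
        rw [Matrix.updateCol_self, Matrix.updateCol_ne hne]
        simp [hM, hci]
    · intro c _ hc
      have hne' : (Fin.castLE hk c : Fin n) ≠ j := by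
        intro h
        apply hc
        ext
        have := congrArg Fin.val h
        simpa [hc0] using this
      rw [show (fun r => if (Fin.castLE hk c : Fin n) = j
          then X (i, Fin.castLE hk r) else (0 : MvPolynomial (Fin n × Fin n) ℂ)) =
          fun _ => 0 from funext fun r => if_neg hne']
      exact Matrix.det_eq_zero_of_column_eq_zero c fun r => by
        rw [Matrix.updateCol_self]
    · intro h; exact absurd (Finset.mem_univ c0) h
  · rw [key, if_neg (by tauto), zero_smul]
    apply Finset.sum_eq_zero
    intro c _
    have hne' : (Fin.castLE hk c : Fin n) ≠ j := by
      intro h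
      exact hjk (h ▸ c.isLt)
    rw [show (fun r => if (Fin.castLE hk c : Fin n) = j
        then X (i, Fin.castLE hk r) else (0 : MvPolynomial (Fin n × Fin n) ℂ)) =
        fun _ => 0 from funext fun r => if_neg hne']
    exact Matrix.det_eq_zero_of_column_eq_zero c fun r => by
      rw [Matrix.updateCol_self]

theorem tele_sum (m : ℕ → ℕ) (hdec : ∀ k, m (k + 1) ≤ m k) (a N : ℕ) (h : a ≤ N) :
    ∑ k ∈ Finset.Ico a N, (m k - m (k + 1)) = m a - m N := by
  have anti : ∀ p q : ℕ, p ≤ q → m q ≤ m p := by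
    intro p q hpq
    induction hpq with
    | refl => exact le_rfl
    | step h ih => exact le_trans (hdec _) (by omega)
  induction N with
  | zero =>
    have : a = 0 := Nat.le_zero.mp h
    subst this; simp
  | succ N ih =>
    rcases Nat.lt_or_ge a (N + 1) with h' | h'
    · have h'' : a ≤ N := Nat.lt_succ_iff.mp h'
      rw [Finset.sum_Ico_succ_top h'', ih h'']
      have h1 := anti a N h''
      have h2 := hdec N
      omega
    · have : a = N + 1 := le_antisymm h h'
      subst this; simp

/-- The vector `v₀ = a_1^{m₁-m₂} a_{1,2}^{m₂-m₃} ⋯ a_{1,…,n}^{m_n}`, a product of the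
leading principal minors. Weights are indexed from `0`: the `(k+1)`-st principal minor
appears with exponent `m k - m (k+1)`. -/
noncomputable def v₀ (n : ℕ) (m : ℕ → ℕ) : MvPolynomial (Fin n × Fin n) ℂ :=
  ∏ k : Fin n,
    aMinor n (k + 1) k.isLt (fun t => Fin.castLE k.isLt t) ^ (m k - m (k + 1))

/-- for a dominant integral weight `[m₁,…,m_n]` (weakly decreasing,
nonnegative, extended by zero), `v₀` is a highest weight vector of weight `[m₁,…,m_n]`:
an eigenvector of each Cartan element `E_{i,i}` with eigenvalue `m_i`, annihilated by
every raising operator `E_{i,j}`, `i < j`. -/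
theorem stmt1 (n : ℕ) (hn : 1 ≤ n) (m : ℕ → ℕ)
    (hdec : ∀ k, m (k + 1) ≤ m k) (hz : ∀ k, n ≤ k → m k = 0) :
    (∀ i : Fin n, Eact n i i (v₀ n m) = (m i : ℂ) • v₀ n m) ∧
    (∀ i j : Fin n, i < j → Eact n i j (v₀ n m) = 0) := by
  have main : ∀ i j : Fin n, i ≤ j →
      Eact n i j (v₀ n m) =
        (∑ k : Fin n, ((m k - m (k + 1) : ℕ) : ℂ) *
          (if i = j ∧ (j : ℕ) < (k : ℕ) + 1 then 1 else 0)) • v₀ n m := by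
    intro i j hij
    rw [v₀]
    apply Derivation.map_prod_eig
    intro k _
    exact Derivation.map_pow_eig _ _ _ (Eact_aMinor n (k + 1) k.isLt i j hij) _
  constructor
  · intro i
    rw [main i i le_rfl]
    congr 1
    have this1 : ∀ k : Fin n, ((m k - m (k + 1) : ℕ) : ℂ) *
        (if i = i ∧ (i : ℕ) < (k : ℕ) + 1 then 1 else 0) =
        (fun t : ℕ => if (i : ℕ) ≤ t then ((m t - m (t + 1) : ℕ) : ℂ) else 0) k := by
      intro k
      by_cases h : (i : ℕ) ≤ (k : ℕ)
      · simp [Nat.lt_succ_iff, h]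
      · simp [Nat.lt_succ_iff, h]
    have e1 : ∑ k : Fin n, (((m k - m (k + 1) : ℕ) : ℂ) *
        (if i = i ∧ (i : ℕ) < (k : ℕ) + 1 then 1 else 0)) =
        ∑ t ∈ Finset.range n,
          (if (i : ℕ) ≤ t then ((m t - m (t + 1) : ℕ) : ℂ) else 0) := by
      rw [← Fin.sum_univ_eq_sum_range
        (fun t : ℕ => if (i : ℕ) ≤ t then ((m t - m (t + 1) : ℕ) : ℂ) else 0) n]
      exact Finset.sum_congr rfl fun k _ => this1 k
    have hfilter : Finset.filter (fun t => (i : ℕ) ≤ t) (Finset.range n) =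
        Finset.Ico (i : ℕ) n := by
      ext t
      simp only [Finset.mem_filter, Finset.mem_Ico, Finset.mem_range]
      tauto
    rw [e1, Finset.sum_ite, Finset.sum_const_zero, add_zero, hfilter,
      ← Nat.cast_sum, tele_sum m hdec _ _ (le_of_lt i.isLt), hz n le_rfl,
      Nat.sub_zero]
  · intro i j hij
    rw [main i j (le_of_lt hij)]
    have this2 : ∀ k : Fin n, ((m k - m (k + 1) : ℕ) : ℂ) *
        (if i = j ∧ (j : ℕ) < (k : ℕ) + 1 then 1 else 0) = 0 := by
      intro k
      rw [if_neg (fun h => (ne_of_lt hij) h.1), mul_zero]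
    rw [Finset.sum_congr rfl fun k _ => this2 k, Finset.sum_const_zero, zero_smul]
end

section
/- (Selection rule) With notation as in the definition of the $6j$-symbol via the pairing formula, let $H = \mathrm{supp}_{Z^1} f_1 \oplus \mathrm{supp}_{Z^2} f_2 \oplus \mathrm{supp}_{Z^3} f_3 \oplus \mathrm{supp}_{Z^4} f_4 \subset (\mathbb{Z}^M)^{\oplus 4}$, let $D \subset (\mathbb{Z}^m)^{\oplus 4}$ be the lattice generated by the sums $e^{A^j_{X,i}} + e^{A^j_{X,i'}}$ of pairs of unit coordinate vectors corresponding to the same variable $A^j_X$ appearing in two different factors $f_i, f_{i'}$ (according to the pairing pattern $A^1: f_1,f_4$; $A^2: f_1,f_3$; $A^3: f_2,f_3$; $A^4: f_1,f_2$; $A^5: f_2,f_4$; $A^6: f_3,f_4$), and let $pr: (\mathbb{Z}^M)^{\oplus 4} \to (\mathbb{Z}^m)^{\oplus 4}$ be the projection induced by substituting the variables $A^j_X$ for the $Z$-variables. If the $6j$-symbol $\begin{Bmatrix} V^1 & V^2 & U\\ V^3 & W & H \end{Bmatrix}^{f_1,f_2}_{f_3,f_4}$ is nonzero, then $H \cap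 pr^{-1}(D) \ne \emptyset$. -/
open MvPolynomial

/-- Index set of the variables `A^j_X` of one family: nonempty proper subsets
`X ⊊ {1,…,n}`. -/
abbrev Kappa (n : ℕ) := {S : Finset (Fin n) // S.Nonempty ∧ S ≠ Finset.univ}

/-- The six families `A^1,…,A^6` of variables `A^j_X` used in the `6j`-symbol formula. -/
abbrev W6 (n : ℕ) := Fin 6 × Kappa n

/-- The pairing pattern of the `6j`-symbol evaluation formula: the family `A^{j+1}` is
differentiated/substituted in the pair of factors `pat j`
(`A^1 : f₁,f₄`, `A^2 : f₁,f₃`, `A^3 : f₂,f₃`, `A^4 : f₁,f₂`, `A^5 : f₂,f₄`,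
`A^6 : f₃,f₄`). -/
def pat : Fin 6 → Fin 4 × Fin 4 := ![(0, 3), (0, 2), (1, 2), (0, 1), (1, 3), (2, 3)]

/-- The degree-matching condition: a quadruple of exponents contributes to the
evaluation at `A = 0` iff for every variable `A^j_X` the order of differentiation
equals the exponent, i.e. the two factors of the pattern carry equal exponents and
the remaining factors do not contain the variable. -/
def matching (n : ℕ) (d : Fin 4 → (W6 n →₀ ℕ)) : Prop :=
  ∀ v : W6 n, d (pat v.1).1 v = d (pat v.1).2 v ∧
    ∀ i : Fin 4, i ≠ (pat v.1).1 → i ≠ (pat v.1).2 → d i v = 0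

open scoped Classical in
/-- The `6j`-symbol: the value of
`f₁(∂_{A¹},∂_{A²},A⁴) f₂(∂_{A⁴},∂_{A³},A⁵) f₃(∂_{A²},A³,∂_{A⁶}) f₄(A¹,A⁶,∂_{A⁵})|_{A=0}`,
computed via `∂^β A^γ|₀ = γ! δ_{β,γ}` as a sum over quadruples of monomials of the
four factors satisfying the degree-matching condition. -/
noncomputable def sixJ (n : ℕ) (F : Fin 4 → MvPolynomial (W6 n) ℂ) : ℂ :=
  ∑ d1 ∈ (F 0).support, ∑ d2 ∈ (F 1).support, ∑ d3 ∈ (F 2).support, ∑ d4 ∈ (F 3).support,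
    if matching n ![d1, d2, d3, d4] then
      (∏ v : W6 n, (Nat.factorial ((![d1, d2, d3, d4]) (pat v.1).1 v) : ℂ)) *
        ∏ i : Fin 4, (F i).coeff (![d1, d2, d3, d4] i)
    else 0

/-- The lattice `D`, generated by the sums `e^{A^j_{X,i}} + e^{A^j_{X,i'}}` of pairs of
unit coordinate vectors corresponding to the same variable `A^j_X` appearing in the two
factors `f_i, f_{i'}` prescribed by the pairing pattern. -/
def Dlat (n : ℕ) : AddSubmonoid (Fin 4 × W6 n → ℕ) :=
  AddSubmonoid.closure
    {u | ∃ w : W6 n, u = fun iw =>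
      (if iw = ((pat w.1).1, w) then 1 else 0) + (if iw = ((pat w.1).2, w) then 1 else 0)}

/-- The projection `pr` from exponents of `Z`-variables to exponents of `A`-variables,
induced by the substitution `Z_α ↦ A^{v i α}` in the factor `f_i`. -/
def pr6 (n : ℕ) (ι : Type) (v : Fin 4 → ι → (W6 n →₀ ℕ)) (x : Fin 4 → (ι →₀ ℕ)) :
    Fin 4 × W6 n → ℕ :=
  fun iw => (x iw.1).sum fun α k => k * v iw.1 α iw.2


section Helpers

lemma aeval_monomial_monomial {σ ι : Type*} (v : ι → (σ →₀ ℕ)) (x : ι →₀ ℕ) (c : ℂ) :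
    aeval (fun α => (monomial (v α) 1 : MvPolynomial σ ℂ)) (monomial x c) =
      monomial (x.sum fun α k => k • v α) c := by
  rw [aeval_monomial, monomial_finsupp_sum_index, algebraMap_eq]
  congr 1
  apply Finsupp.prod_congr
  intro α _
  rw [monomial_pow, one_pow]

lemma coeff_aeval_ne {σ ι : Type*} (f : MvPolynomial ι ℂ) (v : ι → (σ →₀ ℕ))
    (D : σ →₀ ℕ)
    (h : coeff D (aeval (fun α => (monomial (v α) 1 : MvPolynomial σ ℂ)) f) ≠ 0) :
    ∃ x ∈ f.support, (x.sum fun α k => k • v α) = D := by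
  classical
  rw [f.as_sum, map_sum] at h
  simp_rw [aeval_monomial_monomial] at h
  rw [coeff_sum] at h
  obtain ⟨x, hx, hne⟩ := Finset.exists_ne_zero_of_sum_ne_zero h
  refine ⟨x, hx, ?_⟩
  by_contra hne'
  rw [coeff_monomial, if_neg hne'] at hne
  exact hne rfl

lemma mem_Dlat' (n : ℕ) (d : Fin 4 → (W6 n →₀ ℕ)) (hm : matching n d) :
    (fun iw : Fin 4 × W6 n => d iw.1 iw.2) ∈ Dlat n := by
  classical
  have hp : ∀ j : Fin 6, (pat j).1 ≠ (pat j).2 := by decide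
  have key : (fun iw : Fin 4 × W6 n => d iw.1 iw.2) =
      ∑ w : W6 n, (d (pat w.1).1 w) •
        (fun iw => (if iw = ((pat w.1).1, w) then 1 else 0) +
          (if iw = ((pat w.1).2, w) then 1 else 0) : Fin 4 × W6 n → ℕ) := by
    funext iw
    obtain ⟨i, w0⟩ := iw
    rw [Finset.sum_apply]
    rw [Finset.sum_eq_single w0]
    · simp only [Pi.smul_apply, smul_eq_mul]
      by_cases h1 : i = (pat w0.1).1
      · subst h1
        rw [if_pos rfl, if_neg (fun h : ((pat w0.1).1, w0) = ((pat w0.1).2, w0) =>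
          hp w0.1 (congrArg Prod.fst h))]
        simp
      · by_cases h2 : i = (pat w0.1).2
        · subst h2
          rw [if_neg (fun h : ((pat w0.1).2, w0) = ((pat w0.1).1, w0) =>
            hp w0.1 (congrArg Prod.fst h).symm), if_pos rfl]
          simp [(hm w0).1]
        · rw [if_neg (fun h : (i, w0) = ((pat w0.1).1, w0) => h1 (congrArg Prod.fst h)),
            if_neg (fun h : (i, w0) = ((pat w0.1).2, w0) => h2 (congrArg Prod.fst h))]
          simp [(hm w0).2 i h1 h2]
    · intro w _ hw
      simp only [Pi.smul_apply, smul_eq_mul]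
      rw [if_neg (fun h : (i, w0) = ((pat w.1).1, w) => hw (congrArg Prod.snd h).symm),
        if_neg (fun h : (i, w0) = ((pat w.1).2, w) => hw (congrArg Prod.snd h).symm)]
      simp
    · intro h; exact absurd (Finset.mem_univ w0) h
  rw [key]
  exact AddSubmonoid.sum_mem _ fun w _ =>
    AddSubmonoid.nsmul_mem _ (AddSubmonoid.subset_closure (Set.mem_setOf.mpr ⟨w, rfl⟩)) _

end Helpers

/-- selection rule: let `f₁,…,f₄` be polynomials in their collections of
`Z`-variables, substituted into the `6j`-symbol formula via `Z_α ↦ A^{v i α}`.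
If the `6j`-symbol is nonzero then `H ∩ pr⁻¹(D) ≠ ∅`, where
`H = supp f₁ ⊕ supp f₂ ⊕ supp f₃ ⊕ supp f₄`. -/
theorem stmt12 (n : ℕ) (hn : 1 ≤ n) (ι : Type) [Fintype ι] [DecidableEq ι]
    (fZ : Fin 4 → MvPolynomial ι ℂ) (v : Fin 4 → ι → (W6 n →₀ ℕ))
    (h6j : sixJ n (fun i =>
      MvPolynomial.aeval (fun α : ι => (monomial (v i α) 1 : MvPolynomial (W6 n) ℂ))
        (fZ i)) ≠ 0) :
    ∃ x : Fin 4 → (ι →₀ ℕ), (∀ i : Fin 4, x i ∈ (fZ i).support) ∧ pr6 n ι v x ∈ Dlat n := by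
  classical
  set F : Fin 4 → MvPolynomial (W6 n) ℂ := fun i =>
    MvPolynomial.aeval (fun α : ι => (monomial (v i α) 1 : MvPolynomial (W6 n) ℂ)) (fZ i)
    with hF
  rw [hF] at h6j
  unfold sixJ at h6j
  obtain ⟨d1, hd1, h6j⟩ := Finset.exists_ne_zero_of_sum_ne_zero h6j
  obtain ⟨d2, hd2, h6j⟩ := Finset.exists_ne_zero_of_sum_ne_zero h6j
  obtain ⟨d3, hd3, h6j⟩ := Finset.exists_ne_zero_of_sum_ne_zero h6j
  obtain ⟨d4, hd4, h6j⟩ := Finset.exists_ne_zero_of_sum_ne_zero h6j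
  set d : Fin 4 → (W6 n →₀ ℕ) := ![d1, d2, d3, d4] with hd
  have hm : matching n d := by
    by_contra hc
    rw [if_neg hc] at h6j
    exact h6j rfl
  have hsupp : ∀ i : Fin 4, coeff (d i) (F i) ≠ 0 := by
    intro i
    fin_cases i
    · simpa [hd, hF] using hd1
    · simpa [hd, hF] using hd2
    · simpa [hd, hF] using hd3
    · simpa [hd, hF] using hd4
  have hx : ∀ i : Fin 4, ∃ y ∈ (fZ i).support, (y.sum fun α k => k • v i α) = d i :=
    fun i => coeff_aeval_ne (fZ i) (v i) (d i) (hsupp i)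
  choose x hxs hxd using hx
  refine ⟨x, hxs, ?_⟩
  have hpr : pr6 n ι v x = fun iw : Fin 4 × W6 n => d iw.1 iw.2 := by
    funext iw
    have := congrFun (congrArg (⇑) (hxd iw.1)) iw.2
    rw [Finsupp.sum_apply] at this
    simpa [pr6, Finsupp.sum] using this
  rw [hpr]
  exact mem_Dlat' n d hm
end
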